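/- arXiv:2412.07577 — 3 statements merged into one kernel-verified Lean document; each statement's English description precedes it below -/
import Mathlib

section
/- Let n ≥ 3, τ ≥ 1, T ⊆ [-1,1), h : ℝ → ℝ, and let f be a real polynomial of degree at most τ with f(t) ≤ h(t) for every t ∈ [-1,1] \ T. Then for every finite T-avoiding spherical τ-design C ⊆ S^{n-1} (with |C| ≥ 2), one has E^h(C) ≥ f₀·|C| − f(1). -/
open MeasureTheory Finset
open scoped Classical

/-- The normalized surface measure on the unit sphere of `EuclideanSpace ℝ (Fin n)`. -/
noncomputable def normSphereMeasure (n : ℕ) :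
    Measure (Metric.sphere (0 : EuclideanSpace ℝ (Fin n)) 1) :=
  ((volume : Measure (EuclideanSpace ℝ (Fin n))).toSphere Set.univ)⁻¹ •
    (volume : Measure (EuclideanSpace ℝ (Fin n))).toSphere

/-- `C` is a spherical `τ`-design: every polynomial in `n` variables of total degree at
most `τ` has average over `C` equal to its average over the sphere. -/
def IsSphericalDesign (n τ : ℕ) (C : Finset (EuclideanSpace ℝ (Fin n))) : Prop :=
  ∀ p : MvPolynomial (Fin n) ℝ, p.totalDegree ≤ τ →
    (1 / (C.card : ℝ)) * ∑ x ∈ C, MvPolynomial.eval (fun i => x i) p =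
      ∫ x, MvPolynomial.eval (fun i => (x : EuclideanSpace ℝ (Fin n)) i) p
        ∂(normSphereMeasure n)

/-- The discrete `h`-energy of a code `C`. -/
noncomputable def energy (n : ℕ) (h : ℝ → ℝ) (C : Finset (EuclideanSpace ℝ (Fin n))) : ℝ :=
  (1 / (C.card : ℝ)) *
    ∑ x ∈ C, ∑ y ∈ C, if x ≠ y then h (inner ℝ x y : ℝ) else 0

/-- The zeroth Gegenbauer coefficient (mean value) of a polynomial `f` in dimension `n`. -/
noncomputable def gegenbauerZero (n : ℕ) (f : Polynomial ℝ) : ℝ :=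
  (Real.Gamma ((n : ℝ) / 2) / (Real.sqrt Real.pi * Real.Gamma (((n : ℝ) - 1) / 2))) *
    ∫ t in (-1 : ℝ)..1, f.eval t * (1 - t ^ 2) ^ (((n : ℝ) - 3) / 2)

/-! For a unit vector `x`, the average of `f ⟪x, ω⟫` over the sphere is `f₀`. By linearity it
suffices to treat `f = X ^ k`, and then `∫ ⟪x, z⟫ ^ k * exp (-‖z‖ ^ 2)` over `ℝⁿ` is computed in
two ways: in polar coordinates it is the spherical moment times a value of `Γ`, and after
reflecting `x` onto a coordinate axis it factors into one-dimensional Gaussian integrals. A planar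
polar-coordinate computation identifies the resulting ratio of Gaussian moments with
`∫ t in -1..1, t ^ k * (1 - t ^ 2) ^ ((n - 3) / 2)`.

Hence for a `τ`-design `C` and `deg f ≤ τ`, every row sum `∑ y ∈ C, f ⟪x, y⟫` equals `|C| f₀`;
removing the diagonal term `f 1` shows that the `f`-energy of `C` is `f₀ |C| - f 1`, and `f ≤ h`
at every inner product that occurs in `C` gives the bound. -/

open Set Real Metric InnerProductSpace
open scoped RealInnerProductSpace

section GaussianMoments

theorem integral_Ioi_pow_mul_exp_neg_sq (a : ℕ) :
    ∫ r in Ioi (0 : ℝ), r ^ a * exp (-r ^ 2) = Gamma ((a + 1) / 2) / 2 := by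
  have h := integral_rpow_mul_exp_neg_rpow two_pos (by linarith [a.cast_nonneg (α := ℝ)] :
    (-1 : ℝ) < a)
  norm_num [Real.rpow_natCast] at h ⊢
  rw [h]; ring

theorem integral_abs_pow_mul_exp_neg_sq (a : ℕ) :
    ∫ x : ℝ, |x| ^ a * exp (-x ^ 2) = Gamma ((a + 1) / 2) := by
  have h := integral_comp_abs (f := fun t : ℝ => t ^ a * exp (-t ^ 2))
  simp only [sq_abs] at h
  rw [h, integral_Ioi_pow_mul_exp_neg_sq]; ring

theorem integral_exp_neg_sq : ∫ x : ℝ, exp (-x ^ 2) = √π := by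
  simpa using integral_gaussian 1

end GaussianMoments

section BetaMoments

theorem continuous_one_sub_sq_rpow {β : ℝ} (hβ : 0 ≤ β) :
    Continuous fun t : ℝ => (1 - t ^ 2) ^ β :=
  (continuous_const.sub (continuous_pow 2)).rpow_const fun _ => Or.inr hβ

theorem intervalIntegral_cos_pow_mul_sin_pow (k m : ℕ) :
    ∫ θ in (0 : ℝ)..π, cos θ ^ k * sin θ ^ (m + 1) =
      ∫ t in (-1 : ℝ)..1, t ^ k * (1 - t ^ 2) ^ ((m : ℝ) / 2) := by
  have hsubst : _ = _ := intervalIntegral.integral_comp_mul_deriv (a := 0) (b := π)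
    (g := fun t => t ^ k * (1 - t ^ 2) ^ ((m : ℝ) / 2)) (fun θ _ => hasDerivAt_cos θ)
    continuous_sin.neg.continuousOn
    ((continuous_pow k).mul (continuous_one_sub_sq_rpow (by positivity)))
  rw [cos_zero, cos_pi, intervalIntegral.integral_symm (-1) 1] at hsubst
  rw [← neg_eq_iff_eq_neg.mpr hsubst, ← intervalIntegral.integral_neg]
  refine intervalIntegral.integral_congr fun θ hθ => ?_
  rw [uIcc_of_le pi_pos.le] at hθ
  have hsin : 0 ≤ sin θ := sin_nonneg_of_nonneg_of_le_pi hθ.1 hθ.2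
  have hpow : (1 - cos θ ^ 2) ^ ((m : ℝ) / 2) = sin θ ^ m := by
    rw [← sin_sq, ← rpow_natCast, ← rpow_mul hsin]
    norm_num [mul_div_cancel₀]
  simp only [Function.comp_apply, hpow]
  ring

theorem integral_Ioo_cos_pow_mul_abs_sin_pow (k m : ℕ) :
    ∫ θ in Ioo (-π) π, cos θ ^ k * |sin θ| ^ (m + 1) =
      2 * ∫ t in (-1 : ℝ)..1, t ^ k * (1 - t ^ 2) ^ ((m : ℝ) / 2) := by
  have hcont : Continuous fun θ => cos θ ^ k * |sin θ| ^ (m + 1) := by fun_prop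
  have hright : ∫ θ in (0 : ℝ)..π, cos θ ^ k * |sin θ| ^ (m + 1) =
      ∫ t in (-1 : ℝ)..1, t ^ k * (1 - t ^ 2) ^ ((m : ℝ) / 2) := by
    rw [← intervalIntegral_cos_pow_mul_sin_pow]
    refine intervalIntegral.integral_congr fun θ hθ => ?_
    rw [uIcc_of_le pi_pos.le] at hθ
    rw [abs_of_nonneg (sin_nonneg_of_nonneg_of_le_pi hθ.1 hθ.2)]
  have hleft : ∫ θ in (-π)..0, cos θ ^ k * |sin θ| ^ (m + 1) =
      ∫ θ in (0 : ℝ)..π, cos θ ^ k * |sin θ| ^ (m + 1) := by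
    simpa using (intervalIntegral.integral_comp_neg (a := 0) (b := π)
      fun θ => cos θ ^ k * |sin θ| ^ (m + 1)).symm
  rw [← integral_Ioc_eq_integral_Ioo, ← intervalIntegral.integral_of_le (by linarith [pi_pos]),
    ← intervalIntegral.integral_add_adjacent_intervals (b := 0) (hcont.intervalIntegrable _ _)
      (hcont.intervalIntegrable _ _), hleft, hright]
  ring

theorem integral_prod_pow_mul_exp_neg_sq_eq_polar (k j : ℕ) :
    ∫ p : ℝ × ℝ, (p.1 ^ k * exp (-p.1 ^ 2)) * (|p.2| ^ j * exp (-p.2 ^ 2)) =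
      Gamma ((k + j + 2) / 2) / 2 * ∫ θ in Ioo (-π) π, cos θ ^ k * |sin θ| ^ j := by
  rw [← integral_comp_polarCoord_symm, polarCoord_target]
  have hpolar : ∀ p ∈ Ioi (0 : ℝ) ×ˢ Ioo (-π) π,
      p.1 • ((p.1 * cos p.2) ^ k * exp (-(p.1 * cos p.2) ^ 2) *
        (|p.1 * sin p.2| ^ j * exp (-(p.1 * sin p.2) ^ 2))) =
      (p.1 ^ (k + j + 1) * exp (-p.1 ^ 2)) * (cos p.2 ^ k * |sin p.2| ^ j) := by
    rintro ⟨r, θ⟩ ⟨hr, -⟩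
    have hexp : exp (-(r * cos θ) ^ 2) * exp (-(r * sin θ) ^ 2) = exp (-r ^ 2) := by
      rw [← exp_add]
      congr 1
      linear_combination (-r ^ 2) * sin_sq_add_cos_sq θ
    rw [abs_mul, abs_of_pos (show (0 : ℝ) < r from hr), smul_eq_mul, ← hexp]
    ring
  simp only [polarCoord_symm_apply]
  rw [setIntegral_congr_fun (measurableSet_Ioi.prod measurableSet_Ioo) hpolar,
    Measure.volume_eq_prod, ← Measure.prod_restrict, integral_prod_mul
      (f := fun r => r ^ (k + j + 1) * exp (-r ^ 2)) (g := fun θ => cos θ ^ k * |sin θ| ^ j),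
    integral_Ioi_pow_mul_exp_neg_sq]
  push_cast
  ring_nf

theorem intervalIntegral_pow_mul_one_sub_sq_rpow (k m : ℕ) :
    ∫ t in (-1 : ℝ)..1, t ^ k * (1 - t ^ 2) ^ ((m : ℝ) / 2) =
      (∫ x, x ^ k * exp (-x ^ 2)) * Gamma ((m + 2) / 2) / Gamma ((k + m + 3) / 2) := by
  have hfubini :
      ∫ p : ℝ × ℝ, (p.1 ^ k * exp (-p.1 ^ 2)) * (|p.2| ^ (m + 1) * exp (-p.2 ^ 2)) =
        (∫ x, x ^ k * exp (-x ^ 2)) * Gamma ((m + 2) / 2) := by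
    rw [Measure.volume_eq_prod, integral_prod_mul (f := fun x => x ^ k * exp (-x ^ 2))
      (g := fun y => |y| ^ (m + 1) * exp (-y ^ 2)), integral_abs_pow_mul_exp_neg_sq]
    push_cast
    ring_nf
  rw [integral_prod_pow_mul_exp_neg_sq_eq_polar, integral_Ioo_cos_pow_mul_abs_sin_pow] at hfubini
  have hΓ : Gamma ((k + m + 3) / 2) ≠ 0 := (Gamma_pos_of_pos (by positivity)).ne'
  rw [eq_div_iff hΓ, ← hfubini]
  push_cast
  ring_nf

end BetaMoments

section PolarCoordinates

variable {E F : Type*} [NormedAddCommGroup E] [NormedSpace ℝ E] [MeasurableSpace E]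
  [BorelSpace E] [FiniteDimensional ℝ E] [Nontrivial E] (μ : Measure E) [μ.IsAddHaarMeasure]
  [NormedAddCommGroup F] [NormedSpace ℝ F]

theorem integral_eq_integral_toSphere_prod (g : E → F) :
    ∫ x, g x ∂μ = ∫ p : sphere (0 : E) 1 × Ioi (0 : ℝ), g (p.2.1 • p.1.1)
      ∂(μ.toSphere.prod (Measure.volumeIoiPow (Module.finrank ℝ E - 1))) := by
  conv_lhs => rw [← restrict_compl_singleton (μ := μ) 0,
    ← integral_subtype_comap (measurableSet_singleton _).compl g]
  rw [← μ.measurePreserving_homeomorphUnitSphereProd.integral_comp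
    (Homeomorph.measurableEmbedding _) fun p => g (p.2.1 • p.1.1)]
  congr with x
  simp [smul_smul, mul_inv_cancel₀ (norm_ne_zero_iff.mpr x.2)]

theorem integral_volumeIoiPow (m : ℕ) (φ : ℝ → F) :
    ∫ r, φ r.1 ∂(Measure.volumeIoiPow m) = ∫ r in Ioi (0 : ℝ), r ^ m • φ r := by
  simp only [Measure.volumeIoiPow, ENNReal.ofReal]
  rw [integral_withDensity_eq_integral_smul
      ((measurable_subtype_coe.pow_const _).real_toNNReal) (fun r => φ r.1),
    integral_subtype_comap measurableSet_Ioi (fun r => Real.toNNReal (r ^ m) • φ r)]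
  refine setIntegral_congr_fun measurableSet_Ioi fun r hr => ?_
  rw [NNReal.smul_def, Real.coe_toNNReal _ (pow_nonneg hr.out.le _)]

end PolarCoordinates

section SphereMoments

variable {E : Type*} [NormedAddCommGroup E] [InnerProductSpace ℝ E] [MeasurableSpace E]
  [BorelSpace E] [FiniteDimensional ℝ E]

theorem integral_inner_pow_mul_exp_neg_norm_sq [Nontrivial E] (μ : Measure E)
    [μ.IsAddHaarMeasure] (x : E) (k : ℕ) :
    ∫ z, ⟪x, z⟫_ℝ ^ k * exp (-‖z‖ ^ 2) ∂μ =
      (∫ ω, ⟪x, (ω : E)⟫_ℝ ^ k ∂μ.toSphere) *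
        (Gamma ((Module.finrank ℝ E + k) / 2) / 2) := by
  have hdim : 0 < Module.finrank ℝ E := Module.finrank_pos
  rw [integral_eq_integral_toSphere_prod]
  have hsplit : ∀ p : sphere (0 : E) 1 × Ioi (0 : ℝ),
      ⟪x, p.2.1 • (p.1 : E)⟫_ℝ ^ k * exp (-‖p.2.1 • (p.1 : E)‖ ^ 2) =
        ⟪x, (p.1 : E)⟫_ℝ ^ k * (p.2.1 ^ k * exp (-p.2.1 ^ 2)) := by
    intro p
    rw [real_inner_smul_right, norm_smul, norm_eq_of_mem_sphere p.1, Real.norm_eq_abs,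
      abs_of_pos p.2.2.out, mul_one]
    ring
  simp_rw [hsplit]
  rw [integral_prod_mul (f := fun ω : sphere (0 : E) 1 => ⟪x, (ω : E)⟫_ℝ ^ k)
      (g := fun r : Ioi (0 : ℝ) => r.1 ^ k * exp (-r.1 ^ 2)),
    integral_volumeIoiPow _ fun r => r ^ k * exp (-r ^ 2)]
  simp_rw [smul_eq_mul, ← mul_assoc, ← pow_add]
  rw [integral_Ioi_pow_mul_exp_neg_sq]
  congr 4
  push_cast [Nat.sub_add_comm hdim, Nat.cast_sub hdim]
  ring

theorem integral_comp_inner_of_norm_eq {x e : E} (h : ‖x‖ = ‖e‖) (G : ℝ → ℝ → ℝ) :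
    ∫ z, G ⟪x, z⟫_ℝ ‖z‖ = ∫ z, G ⟪e, z⟫_ℝ ‖z‖ := by
  set ρ := Submodule.reflection (ℝ ∙ (x - e))ᗮ
  rw [← MeasureTheory.integral_comp ρ fun z => G ⟪x, z⟫_ℝ ‖z‖]
  congr with z
  rw [← ρ.inner_map_map, Submodule.reflection_sub h, Submodule.reflection_reflection,
    ρ.norm_map]

end SphereMoments

section EuclideanSphere

theorem integral_apply_pow_mul_exp_neg_norm_sq {ι : Type*} [Fintype ι] (i : ι) (k : ℕ) :
    ∫ w : EuclideanSpace ℝ ι, w i ^ k * exp (-‖w‖ ^ 2) =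
      (∫ t, t ^ k * exp (-t ^ 2)) * √π ^ (Fintype.card ι - 1) := by
  rw [← (PiLp.volume_preserving_toLp ι).integral_comp
    (MeasurableEquiv.toLp 2 (ι → ℝ)).measurableEmbedding]
  have hprod : ∀ y : ι → ℝ, (WithLp.toLp 2 y) i ^ k * exp (-‖WithLp.toLp 2 y‖ ^ 2) =
      ∏ j, (fun j t => (if j = i then t ^ k else 1) * exp (-t ^ 2)) j (y j) := by
    intro y
    simp only [EuclideanSpace.norm_sq_eq, Real.norm_eq_abs, sq_abs, prod_mul_distrib,
      prod_ite_eq', ← exp_sum, sum_neg_distrib]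
    rw [if_pos (Finset.mem_univ i)]
  simp_rw [hprod]
  rw [integral_fintype_prod_volume_eq_prod fun j t => (if j = i then t ^ k else 1) * exp (-t ^ 2),
    ← mul_prod_erase _ _ (mem_univ i)]
  simp only [if_true]
  have hother : ∀ j ∈ univ.erase i,
      ∫ t, (if j = i then t ^ k else 1) * exp (-t ^ 2) = √π := fun j hj => by
    simp only [if_neg (ne_of_mem_erase hj), one_mul, integral_exp_neg_sq]
  rw [prod_congr rfl hother, prod_const, card_erase_of_mem (Finset.mem_univ i), card_univ]

variable {n : ℕ}

theorem integral_toSphere_inner_pow [NeZero n] {x : EuclideanSpace ℝ (Fin n)} (hx : ‖x‖ = 1)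
    (k : ℕ) :
    ∫ ω, ⟪x, (ω : EuclideanSpace ℝ (Fin n))⟫_ℝ ^ k
        ∂(volume : Measure (EuclideanSpace ℝ (Fin n))).toSphere =
      2 * (∫ t, t ^ k * exp (-t ^ 2)) * √π ^ (n - 1) / Gamma ((n + k) / 2) := by
  have hpolar := integral_inner_pow_mul_exp_neg_norm_sq volume x k
  have hrot := integral_comp_inner_of_norm_eq
    (show ‖x‖ = ‖EuclideanSpace.single (0 : Fin n) (1 : ℝ)‖ by simp [hx])
    fun s r => s ^ k * exp (-r ^ 2)
  simp only [EuclideanSpace.inner_single_left, map_one, one_mul] at hrot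
  rw [hrot, integral_apply_pow_mul_exp_neg_norm_sq, finrank_euclideanSpace_fin,
    Fintype.card_fin] at hpolar
  have hnpos : (0 : ℝ) < n := mod_cast NeZero.pos n
  have hΓ : Gamma ((n + k) / 2) ≠ 0 := (Gamma_pos_of_pos (by positivity)).ne'
  rw [eq_div_iff hΓ]
  linear_combination (-2) * hpolar

theorem integral_normSphereMeasure_inner_pow [NeZero n] {x : EuclideanSpace ℝ (Fin n)}
    (hx : ‖x‖ = 1) (k : ℕ) :
    ∫ ω, ⟪x, (ω : EuclideanSpace ℝ (Fin n))⟫_ℝ ^ k ∂normSphereMeasure n =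
      Gamma (n / 2) * (∫ t, t ^ k * exp (-t ^ 2)) / (√π * Gamma ((n + k) / 2)) := by
  have hvol : (volume : Measure (EuclideanSpace ℝ (Fin n))).toSphere.real univ =
      2 * √π * √π ^ (n - 1) / Gamma (n / 2) := by
    have h0 := integral_toSphere_inner_pow hx 0
    simp only [pow_zero, integral_const, smul_eq_mul, mul_one, one_mul, integral_exp_neg_sq,
      Nat.cast_zero, add_zero] at h0
    exact h0
  rw [normSphereMeasure, integral_smul_measure, integral_toSphere_inner_pow hx,
    ENNReal.toReal_inv, ← measureReal_def, hvol, smul_eq_mul]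
  have hnpos : (0 : ℝ) < n := mod_cast NeZero.pos n
  have hΓ : Gamma (n / 2) ≠ 0 := (Gamma_pos_of_pos (by positivity)).ne'
  have hΓk : Gamma ((n + k) / 2) ≠ 0 := (Gamma_pos_of_pos (by positivity)).ne'
  field_simp

theorem integral_normSphereMeasure_inner_pow_eq_gegenbauerZero (hn : 3 ≤ n)
    {x : EuclideanSpace ℝ (Fin n)} (hx : ‖x‖ = 1) (k : ℕ) :
    ∫ ω, ⟪x, (ω : EuclideanSpace ℝ (Fin n))⟫_ℝ ^ k ∂normSphereMeasure n =
      gegenbauerZero n (Polynomial.X ^ k) := by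
  obtain ⟨m, rfl⟩ : ∃ m, n = m + 3 := ⟨n - 3, by omega⟩
  have hexp : ((↑(m + 3) : ℝ) - 3) / 2 = (m : ℝ) / 2 := by push_cast; ring
  have hΓ : ((↑(m + 3) : ℝ) - 1) / 2 = (m + 2) / 2 := by push_cast; ring
  have hΓk : ((↑(m + 3) : ℝ) + k) / 2 = (k + m + 3) / 2 := by push_cast; ring
  simp only [integral_normSphereMeasure_inner_pow hx, gegenbauerZero, Polynomial.eval_pow,
    Polynomial.eval_X, hexp, hΓ, hΓk, intervalIntegral_pow_mul_one_sub_sq_rpow]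
  have hΓpos : Gamma ((m + 2) / 2) ≠ 0 := (Gamma_pos_of_pos (by positivity)).ne'
  field_simp

end EuclideanSphere

section Gegenbauer

variable {n : ℕ}

instance : IsFiniteMeasure (normSphereMeasure n) := by
  constructor
  rw [normSphereMeasure, Measure.smul_apply, smul_eq_mul]
  rcases eq_or_ne ((volume : Measure (EuclideanSpace ℝ (Fin n))).toSphere univ) 0 with h | h
  · simp [h]
  · rw [ENNReal.inv_mul_cancel h (measure_ne_top _ _)]
    exact ENNReal.one_lt_top

theorem gegenbauerZero_add (hn : 3 ≤ n) (p q : Polynomial ℝ) :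
    gegenbauerZero n (p + q) = gegenbauerZero n p + gegenbauerZero n q := by
  have hβ : (0 : ℝ) ≤ (n - 3) / 2 := by
    have : (3 : ℝ) ≤ n := mod_cast hn
    linarith
  have hint (r : Polynomial ℝ) : IntervalIntegrable
      (fun t => r.eval t * (1 - t ^ 2) ^ (((n : ℝ) - 3) / 2)) volume (-1) 1 :=
    (r.continuous.mul (continuous_one_sub_sq_rpow hβ)).intervalIntegrable _ _
  simp only [gegenbauerZero, Polynomial.eval_add, add_mul,
    intervalIntegral.integral_add (hint p) (hint q), mul_add]

theorem gegenbauerZero_monomial (k : ℕ) (a : ℝ) :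
    gegenbauerZero n (Polynomial.monomial k a) = a * gegenbauerZero n (Polynomial.X ^ k) := by
  simp only [gegenbauerZero, Polynomial.eval_monomial, Polynomial.eval_pow, Polynomial.eval_X,
    mul_assoc, intervalIntegral.integral_const_mul]
  ring

theorem integral_normSphereMeasure_eval_inner (hn : 3 ≤ n) {x : EuclideanSpace ℝ (Fin n)}
    (hx : ‖x‖ = 1) (f : Polynomial ℝ) :
    ∫ ω, f.eval ⟪x, (ω : EuclideanSpace ℝ (Fin n))⟫_ℝ ∂normSphereMeasure n =
      gegenbauerZero n f := by
  induction f using Polynomial.induction_on' with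
  | add p q hp hq =>
    have hint (r : Polynomial ℝ) :
        Integrable (fun ω : sphere (0 : EuclideanSpace ℝ (Fin n)) 1 => r.eval ⟪x, ω⟫_ℝ)
          (normSphereMeasure n) :=
      (r.continuous.comp (continuous_const.inner continuous_subtype_val))
        |>.integrable_of_hasCompactSupport (HasCompactSupport.of_compactSpace _)
    simp only [Polynomial.eval_add, integral_add (hint p) (hint q), hp, hq,
      gegenbauerZero_add hn]
  | monomial k a =>
    simp only [Polynomial.eval_monomial, integral_const_mul, gegenbauerZero_monomial,
      integral_normSphereMeasure_inner_pow_eq_gegenbauerZero hn hx]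

end Gegenbauer

section Design

theorem MvPolynomial.totalDegree_aeval_le {σ R : Type*} [CommSemiring R]
    (L : MvPolynomial σ R) (f : Polynomial R) :
    (Polynomial.aeval L f).totalDegree ≤ f.natDegree * L.totalDegree := by
  rw [Polynomial.aeval_eq_sum_range]
  refine (totalDegree_finsetSum _ _).trans (Finset.sup_le fun i hi => ?_)
  refine (totalDegree_smul_le _ _).trans ((totalDegree_pow _ _).trans ?_)
  exact Nat.mul_le_mul_right _ (Nat.lt_succ_iff.mp (mem_range.mp hi))

variable {n : ℕ}

theorem exists_mvPolynomial_eval_eq_eval_inner (x : EuclideanSpace ℝ (Fin n))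
    (f : Polynomial ℝ) :
    ∃ p : MvPolynomial (Fin n) ℝ, p.totalDegree ≤ f.natDegree ∧
      ∀ y : EuclideanSpace ℝ (Fin n),
        MvPolynomial.eval (fun i => y i) p = f.eval ⟪x, y⟫_ℝ := by
  set L : MvPolynomial (Fin n) ℝ := ∑ i, MvPolynomial.C (x i) * MvPolynomial.X i
  have hL : L.totalDegree ≤ 1 := by
    refine (MvPolynomial.totalDegree_finsetSum _ _).trans (Finset.sup_le fun i _ => ?_)
    refine (MvPolynomial.totalDegree_mul _ _).trans ?_
    simp [MvPolynomial.totalDegree_C, MvPolynomial.totalDegree_X]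
  refine ⟨Polynomial.aeval L f, ?_, fun y => ?_⟩
  · calc (Polynomial.aeval L f).totalDegree ≤ f.natDegree * L.totalDegree :=
          MvPolynomial.totalDegree_aeval_le L f
      _ ≤ f.natDegree := (Nat.mul_le_mul_left _ hL).trans_eq (mul_one _)
  · change MvPolynomial.aeval (fun i => y i) (Polynomial.aeval L f) = _
    rw [← Polynomial.aeval_algHom_apply, Polynomial.aeval_def, Algebra.algebraMap_self,
      Polynomial.eval₂_id]
    simp [L, PiLp.inner_apply, mul_comm]

theorem IsSphericalDesign.sum_eval_inner {τ : ℕ} {C : Finset (EuclideanSpace ℝ (Fin n))}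
    (hC : IsSphericalDesign n τ C) (hn : 3 ≤ n) {x : EuclideanSpace ℝ (Fin n)}
    (hx : ‖x‖ = 1) {f : Polynomial ℝ} (hf : f.natDegree ≤ τ) :
    ∑ y ∈ C, f.eval ⟪x, y⟫_ℝ = C.card * gegenbauerZero n f := by
  obtain ⟨p, hp, hpeval⟩ := exists_mvPolynomial_eval_eq_eval_inner x f
  have h := hC p (hp.trans hf)
  simp only [hpeval, integral_normSphereMeasure_eval_inner hn hx] at h
  rcases C.eq_empty_or_nonempty with rfl | hne
  · simp
  · rw [← h]
    field_simp [hne.card_pos.ne']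

end Design

section Energy

variable {n : ℕ}

theorem energy_mono {h₁ h₂ : ℝ → ℝ} {C : Finset (EuclideanSpace ℝ (Fin n))}
    (hle : ∀ x ∈ C, ∀ y ∈ C, x ≠ y → h₁ ⟪x, y⟫_ℝ ≤ h₂ ⟪x, y⟫_ℝ) :
    energy n h₁ C ≤ energy n h₂ C := by
  refine mul_le_mul_of_nonneg_left (sum_le_sum fun x hx => sum_le_sum fun y hy => ?_)
    (by positivity)
  split_ifs with hxy
  · exact hle x hx y hy hxy
  · rfl

theorem IsSphericalDesign.energy_eval {τ : ℕ} {C : Finset (EuclideanSpace ℝ (Fin n))}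
    (hC : IsSphericalDesign n τ C) (hn : 3 ≤ n) (hsphere : ∀ x ∈ C, ‖x‖ = 1)
    (hne : C.Nonempty) {f : Polynomial ℝ} (hf : f.natDegree ≤ τ) :
    energy n (fun t => f.eval t) C = gegenbauerZero n f * C.card - f.eval 1 := by
  have hrow : ∀ x ∈ C, ∑ y ∈ C, (if x ≠ y then f.eval ⟪x, y⟫_ℝ else 0) =
      C.card * gegenbauerZero n f - f.eval 1 := by
    intro x hx
    rw [← sum_filter, filter_ne, sum_erase_eq_sub hx, hC.sum_eval_inner hn (hsphere x hx) hf,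
      real_inner_self_eq_norm_sq, hsphere x hx, one_pow]
  rw [energy, sum_congr rfl hrow, sum_const, nsmul_eq_mul]
  field_simp [hne.card_pos.ne']

end Energy

theorem lower_LP_bound_for_designs_general (n τ : ℕ) (hn : 3 ≤ n)
    (T : Set ℝ)
    (h : ℝ → ℝ) (f : Polynomial ℝ) (hdeg : f.natDegree ≤ τ)
    (hfh : ∀ t ∈ Set.Icc (-1 : ℝ) 1 \ T, f.eval t ≤ h t)
    (C : Finset (EuclideanSpace ℝ (Fin n)))
    (hCsphere : ∀ x ∈ C, ‖x‖ = 1) (hCcard : 2 ≤ C.card)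
    (hCavoid : ∀ x ∈ C, ∀ y ∈ C, x ≠ y → (inner ℝ x y : ℝ) ∉ T)
    (hCdesign : IsSphericalDesign n τ C) :
    energy n h C ≥ gegenbauerZero n f * C.card - f.eval 1 := by
  rw [ge_iff_le, ← hCdesign.energy_eval hn hCsphere (card_pos.mp (by omega)) hdeg]
  exact energy_mono fun x hx y hy hxy =>
    hfh _ ⟨real_inner_mem_Icc_of_norm_eq_one (hCsphere x hx) (hCsphere y hy),
      hCavoid x hx y hy hxy⟩

theorem lower_LP_bound_for_designs (n τ : ℕ) (hn : 3 ≤ n) (hτ : 1 ≤ τ)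
    (T : Set ℝ) (hT : T ⊆ Set.Ico (-1 : ℝ) 1)
    (h : ℝ → ℝ) (f : Polynomial ℝ) (hdeg : f.natDegree ≤ τ)
    (hfh : ∀ t ∈ Set.Icc (-1 : ℝ) 1 \ T, f.eval t ≤ h t)
    (C : Finset (EuclideanSpace ℝ (Fin n)))
    (hCsphere : ∀ x ∈ C, ‖x‖ = 1) (hCcard : 2 ≤ C.card)
    (hCavoid : ∀ x ∈ C, ∀ y ∈ C, x ≠ y → (inner ℝ x y : ℝ) ∉ T)
    (hCdesign : IsSphericalDesign n τ C) :
    energy n h C ≥ gegenbauerZero n f * C.card - f.eval 1 :=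
  lower_LP_bound_for_designs_general n τ hn T h f hdeg hfh C hCsphere hCcard hCavoid hCdesign
end

section
/- Let n ≥ 3, T ⊆ [-1,1), h : ℝ → ℝ, and let f be a real polynomial such that (i) f(t) ≤ h(t) for every t ∈ [-1,1] \ T, and (ii) for every finite set B ⊆ S^{n-1} one has ∑_{x,y∈B} f(⟨x,y⟩) ≥ f₀·|B|² (this encodes that all Gegenbauer coefficients f_i, i ≥ 1, of f are nonnegative). Then for every finite T-avoiding code C ⊆ S^{n-1} (with |C| ≥ 2), one has E^h(C) ≥ f₀·|C| − f(1). -/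
open MeasureTheory Finset
open scoped Classical

/-! The diagonal of `∑_{x,y ∈ C} f ⟪x, y⟫` contributes `|C| f(1)`; off the diagonal the inner
products lie in `[-1, 1] \ T`, where `f ≤ h`. So positive definiteness gives
`f₀ |C|² ≤ ∑_{x,y ∈ C} f ⟪x, y⟫ ≤ |C| E^h(C) + |C| f(1)`. -/

namespace SphericalCode

variable {E : Type*} [NormedAddCommGroup E] [InnerProductSpace ℝ E]

theorem inner_mem_Icc_of_norm_eq_one {x y : E} (hx : ‖x‖ = 1) (hy : ‖y‖ = 1) :
    inner ℝ x y ∈ Set.Icc (-1 : ℝ) 1 := by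
  have := abs_real_inner_le_norm x y
  rw [hx, hy, one_mul] at this
  exact abs_le.mp this

variable [DecidableEq E]

noncomputable def offDiagPairSum (g : ℝ → ℝ) (C : Finset E) : ℝ :=
  ∑ x ∈ C, ∑ y ∈ C, if x ≠ y then g (inner ℝ x y) else 0

theorem offDiagPairSum_add_card_mul (g : ℝ → ℝ) {C : Finset E} (hC : ∀ x ∈ C, ‖x‖ = 1) :
    offDiagPairSum g C + C.card * g 1 = ∑ x ∈ C, ∑ y ∈ C, g (inner ℝ x y) := by
  have hrow : ∀ x ∈ C, (∑ y ∈ C, if x ≠ y then g (inner ℝ x y) else 0) + g 1 =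
      ∑ y ∈ C, g (inner ℝ x y) := by
    intro x hx
    have hdiag : g 1 = ∑ y ∈ C, if x = y then g 1 else 0 := by rw [sum_ite_eq, if_pos hx]
    rw [hdiag, ← sum_add_distrib]
    refine sum_congr rfl fun y _ => ?_
    by_cases hxy : x = y
    · subst hxy
      simp [hC x hx]
    · simp [hxy]
  rw [offDiagPairSum, ← nsmul_eq_mul, ← sum_const, ← sum_add_distrib]
  exact sum_congr rfl hrow

theorem offDiagPairSum_mono {g h : ℝ → ℝ} {s : Set ℝ} {C : Finset E}
    (hgh : ∀ t ∈ s, g t ≤ h t) (hC : ∀ x ∈ C, ∀ y ∈ C, x ≠ y → inner ℝ x y ∈ s) :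
    offDiagPairSum g C ≤ offDiagPairSum h C := by
  refine sum_le_sum fun x hx => sum_le_sum fun y hy => ?_
  split_ifs with hxy
  · exact hgh _ (hC x hx y hy hxy)
  · exact le_rfl

theorem energy_eq_offDiagPairSum_div (n : ℕ) (h : ℝ → ℝ) (C : Finset (EuclideanSpace ℝ (Fin n))) :
    energy n h C = offDiagPairSum h C / C.card := by
  rw [energy, offDiagPairSum, one_div_mul_eq_div]

end SphericalCode

open SphericalCode in
theorem lower_LP_bound_for_codes_general (n : ℕ)
    (T : Set ℝ)
    (h : ℝ → ℝ) (f : Polynomial ℝ)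
    (hfh : ∀ t ∈ Set.Icc (-1 : ℝ) 1 \ T, f.eval t ≤ h t)
    (hfpd : ∀ B : Finset (EuclideanSpace ℝ (Fin n)), (∀ x ∈ B, ‖x‖ = 1) →
      ∑ x ∈ B, ∑ y ∈ B, f.eval (inner ℝ x y : ℝ) ≥ gegenbauerZero n f * (B.card : ℝ) ^ 2)
    (C : Finset (EuclideanSpace ℝ (Fin n)))
    (hCsphere : ∀ x ∈ C, ‖x‖ = 1) (hCcard : 2 ≤ C.card)
    (hCavoid : ∀ x ∈ C, ∀ y ∈ C, x ≠ y → (inner ℝ x y : ℝ) ∉ T) :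
    energy n h C ≥ gegenbauerZero n f * C.card - f.eval 1 := by
  have hcard : (0 : ℝ) < C.card := by exact_mod_cast (by omega : 0 < C.card)
  have hf_offDiag : gegenbauerZero n f * (C.card : ℝ) ^ 2 - C.card * f.eval 1 ≤
      offDiagPairSum f.eval C := by
    linarith [hfpd C hCsphere, offDiagPairSum_add_card_mul f.eval hCsphere]
  have hf_le_h : offDiagPairSum f.eval C ≤ offDiagPairSum h C :=
    offDiagPairSum_mono hfh fun x hx y hy hxy =>
      ⟨inner_mem_Icc_of_norm_eq_one (hCsphere x hx) (hCsphere y hy), hCavoid x hx y hy hxy⟩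
  rw [energy_eq_offDiagPairSum_div, ge_iff_le, le_div_iff₀ hcard]
  linarith

theorem lower_LP_bound_for_codes (n : ℕ) (hn : 3 ≤ n)
    (T : Set ℝ) (hT : T ⊆ Set.Ico (-1 : ℝ) 1)
    (h : ℝ → ℝ) (f : Polynomial ℝ)
    (hfh : ∀ t ∈ Set.Icc (-1 : ℝ) 1 \ T, f.eval t ≤ h t)
    (hfpd : ∀ B : Finset (EuclideanSpace ℝ (Fin n)), (∀ x ∈ B, ‖x‖ = 1) →
      ∑ x ∈ B, ∑ y ∈ B, f.eval (inner ℝ x y : ℝ) ≥ gegenbauerZero n f * (B.card : ℝ) ^ 2)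
    (C : Finset (EuclideanSpace ℝ (Fin n)))
    (hCsphere : ∀ x ∈ C, ‖x‖ = 1) (hCcard : 2 ≤ C.card)
    (hCavoid : ∀ x ∈ C, ∀ y ∈ C, x ≠ y → (inner ℝ x y : ℝ) ∉ T) :
    energy n h C ≥ gegenbauerZero n f * C.card - f.eval 1 :=
  lower_LP_bound_for_codes_general n T h f hfh hfpd C hCsphere hCcard hCavoid
end

section
/- For every real polynomial f of degree at most 11, c₄₈ ∫_{-1}^{1} f(t)(1-t²)^{45/2} dt = (1/52416000)·[36848·(f(-1/2)+f(1/2)) + 1678887·(f(-1/3)+f(1/3)) + 12608784·(f(-1/6)+f(1/6)) + 23766960·f(0) + f(-1) + f(1)], where c₄₈ = Γ(24)/(√π·Γ(47/2)). -/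
open Real intervalIntegral

lemma contw : Continuous fun x : ℝ => (1 - x^2) ^ ((45:ℝ)/2) := by
  apply Continuous.rpow_const (by fun_prop)
  intro x; right; norm_num

lemma I_odd (k : ℕ) (hk : Odd k) :
    ∫ x in (-1:ℝ)..1, x^k * (1-x^2)^((45:ℝ)/2) = 0 := by
  have h := intervalIntegral.integral_comp_neg (a := (-1:ℝ)) (b := 1)
    (fun x => x^k * (1-x^2)^((45:ℝ)/2))
  simp only [hk.neg_pow, neg_sq, neg_mul, neg_neg, intervalIntegral.integral_neg] at h
  linarith

lemma cosC (n : ℕ) : ∫ x in (-(π/2))..(π/2), cos x ^ (2*n)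
    = π * Nat.factorial (2*n) / (4^n * (Nat.factorial n)^2) := by
  induction n with
  | zero => simp [Nat.factorial]
  | succ n ih =>
      have h := integral_cos_pow (a := -(π/2)) (b := π/2) (n := 2*n)
      rw [show 2*(n+1) = 2*n+2 by ring, h, ih, Real.cos_pi_div_two, Real.cos_neg,
        Real.cos_pi_div_two, zero_pow (by omega), zero_mul, zero_mul, sub_zero, zero_div,
        zero_add]
      rw [show 2*n+2 = (2*n+1)+1 by ring, Nat.factorial_succ, Nat.factorial_succ,
        Nat.factorial_succ]
      have h1 : (Nat.factorial n : ℝ) ≠ 0 := Nat.cast_ne_zero.2 n.factorial_ne_zero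
      have h4 : (4:ℝ)^n ≠ 0 := by positivity
      push_cast
      field_simp
      ring

lemma I_sub (k : ℕ) : ∫ x in (-1:ℝ)..1, x^k * (1-x^2)^((45:ℝ)/2)
    = ∫ x in (-(π/2))..(π/2), sin x ^ k * cos x ^ 46 := by
  have hg : Continuous fun u:ℝ => u^k * (1-u^2)^((45:ℝ)/2) := (continuous_pow k).mul contw
  have h := intervalIntegral.integral_comp_mul_deriv (f := Real.sin) (f' := Real.cos)
      (a := -(π/2)) (b := π/2) (fun x _ => Real.hasDerivAt_sin x) Real.continuousOn_cos hg
  rw [Real.sin_neg, Real.sin_pi_div_two] at h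
  rw [← h]
  apply intervalIntegral.integral_congr
  intro x hx
  rw [Set.uIcc_of_le (neg_le_self (le_of_lt (half_pos Real.pi_pos)))] at hx
  have hc : 0 ≤ cos x := Real.cos_nonneg_of_mem_Icc hx
  have h1 : (1 - sin x^2 : ℝ) = cos x^2 := by rw [Real.sin_sq]; ring
  have h2 : ((cos x^2 : ℝ))^((45:ℝ)/2) = cos x ^ (45:ℕ) := by
    rw [← Real.rpow_natCast (cos x) 2, ← Real.rpow_mul hc, ← Real.rpow_natCast (cos x) 45]
    norm_num
  show sin x ^ k * (1 - sin x^2)^((45:ℝ)/2) * cos x = sin x ^ k * cos x ^ 46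
  rw [h1, h2]
  ring

lemma split6 (c1 c2 c3 c4 c5 c6 : ℝ) (n1 n2 n3 n4 n5 n6 : ℕ) :
    (∫ x in (-(π/2))..(π/2), (c1*cos x^n1 + c2*cos x^n2 + c3*cos x^n3 + c4*cos x^n4
        + c5*cos x^n5 + c6*cos x^n6))
    = c1*(∫ x in (-(π/2))..(π/2), cos x^n1) + c2*(∫ x in (-(π/2))..(π/2), cos x^n2)
      + c3*(∫ x in (-(π/2))..(π/2), cos x^n3) + c4*(∫ x in (-(π/2))..(π/2), cos x^n4)
      + c5*(∫ x in (-(π/2))..(π/2), cos x^n5) + c6*(∫ x in (-(π/2))..(π/2), cos x^n6) := by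
  rw [intervalIntegral.integral_add (by apply Continuous.intervalIntegrable; fun_prop)
        (by apply Continuous.intervalIntegrable; fun_prop),
      intervalIntegral.integral_add (by apply Continuous.intervalIntegrable; fun_prop)
        (by apply Continuous.intervalIntegrable; fun_prop),
      intervalIntegral.integral_add (by apply Continuous.intervalIntegrable; fun_prop)
        (by apply Continuous.intervalIntegrable; fun_prop),
      intervalIntegral.integral_add (by apply Continuous.intervalIntegrable; fun_prop)
        (by apply Continuous.intervalIntegrable; fun_prop),
      intervalIntegral.integral_add (by apply Continuous.intervalIntegrable; fun_prop)
        (by apply Continuous.intervalIntegrable; fun_prop),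
      intervalIntegral.integral_const_mul, intervalIntegral.integral_const_mul,
      intervalIntegral.integral_const_mul, intervalIntegral.integral_const_mul,
      intervalIntegral.integral_const_mul, intervalIntegral.integral_const_mul]


lemma C23 : ∫ x in (-(π/2))..(π/2), cos x ^ 46 = π * (514589420475/4398046511104) := by
  rw [show (46:ℕ) = 2*23 by norm_num, cosC, mul_div_assoc]
  congr 1
  norm_num [Nat.factorial]


lemma C24 : ∫ x in (-(π/2))..(π/2), cos x ^ 48 = π * (8061900920775/70368744177664) := by
  rw [show (48:ℕ) = 2*24 by norm_num, cosC, mul_div_assoc]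
  congr 1
  norm_num [Nat.factorial]


lemma C25 : ∫ x in (-(π/2))..(π/2), cos x ^ 50 = π * (15801325804719/140737488355328) := by
  rw [show (50:ℕ) = 2*25 by norm_num, cosC, mul_div_assoc]
  congr 1
  norm_num [Nat.factorial]


lemma C26 : ∫ x in (-(π/2))..(π/2), cos x ^ 52 = π * (61989816618513/562949953421312) := by
  rw [show (52:ℕ) = 2*26 by norm_num, cosC, mul_div_assoc]
  congr 1
  norm_num [Nat.factorial]


lemma C27 : ∫ x in (-(π/2))..(π/2), cos x ^ 54 = π * (121683714103007/1125899906842624) := by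
  rw [show (54:ℕ) = 2*27 by norm_num, cosC, mul_div_assoc]
  congr 1
  norm_num [Nat.factorial]


lemma C28 : ∫ x in (-(π/2))..(π/2), cos x ^ 56 = π * (956086325095055/9007199254740992) := by
  rw [show (56:ℕ) = 2*28 by norm_num, cosC, mul_div_assoc]
  congr 1
  norm_num [Nat.factorial]


lemma E0 : ∫ x in (-1:ℝ)..1, x^0 * (1-x^2)^((45:ℝ)/2)
    = π * (514589420475/4398046511104) := by
  rw [I_sub 0]
  simp only [pow_zero, one_mul]
  exact C23

lemma E2 : ∫ x in (-1:ℝ)..1, x^2 * (1-x^2)^((45:ℝ)/2)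
    = π * (171529806825/70368744177664) := by
  rw [show (2:ℕ) = 2*1 by norm_num, I_sub]
  have hexp : Set.EqOn (fun x => sin x ^ (2*1) * cos x ^ 46)
      (fun x : ℝ => (1)*cos x^46 + (-1)*cos x^48 + (0)*cos x^50 + (0)*cos x^52 + (0)*cos x^54 + (0)*cos x^56)
      (Set.uIcc (-(π/2)) (π/2)) := by
    intro x _
    simp only
    rw [pow_mul, Real.sin_sq]
    ring
  rw [intervalIntegral.integral_congr hexp, split6, C23, C24, C25, C26, C27, C28]
  ring


lemma E4 : ∫ x in (-1:ℝ)..1, x^4 * (1-x^2)^((45:ℝ)/2)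
    = π * (20583576819/140737488355328) := by
  rw [show (4:ℕ) = 2*2 by norm_num, I_sub]
  have hexp : Set.EqOn (fun x => sin x ^ (2*2) * cos x ^ 46)
      (fun x : ℝ => (1)*cos x^46 + (-2)*cos x^48 + (1)*cos x^50 + (0)*cos x^52 + (0)*cos x^54 + (0)*cos x^56)
      (Set.uIcc (-(π/2)) (π/2)) := by
    intro x _
    simp only
    rw [pow_mul, Real.sin_sq]
    ring
  rw [intervalIntegral.integral_congr hexp, split6, C23, C24, C25, C26, C27, C28]
  ring


lemma E6 : ∫ x in (-1:ℝ)..1, x^6 * (1-x^2)^((45:ℝ)/2)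
    = π * (7916760315/562949953421312) := by
  rw [show (6:ℕ) = 2*3 by norm_num, I_sub]
  have hexp : Set.EqOn (fun x => sin x ^ (2*3) * cos x ^ 46)
      (fun x : ℝ => (1)*cos x^46 + (-3)*cos x^48 + (3)*cos x^50 + (-1)*cos x^52 + (0)*cos x^54 + (0)*cos x^56)
      (Set.uIcc (-(π/2)) (π/2)) := by
    intro x _
    simp only
    rw [pow_mul, Real.sin_sq]
    ring
  rw [intervalIntegral.integral_congr hexp, split6, C23, C24, C25, C26, C27, C28]
  ring


lemma E8 : ∫ x in (-1:ℝ)..1, x^8 * (1-x^2)^((45:ℝ)/2)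
    = π * (2052493415/1125899906842624) := by
  rw [show (8:ℕ) = 2*4 by norm_num, I_sub]
  have hexp : Set.EqOn (fun x => sin x ^ (2*4) * cos x ^ 46)
      (fun x : ℝ => (1)*cos x^46 + (-4)*cos x^48 + (6)*cos x^50 + (-4)*cos x^52 + (1)*cos x^54 + (0)*cos x^56)
      (Set.uIcc (-(π/2)) (π/2)) := by
    intro x _
    simp only
    rw [pow_mul, Real.sin_sq]
    ring
  rw [intervalIntegral.integral_congr hexp, split6, C23, C24, C25, C26, C27, C28]
  ring


lemma E10 : ∫ x in (-1:ℝ)..1, x^10 * (1-x^2)^((45:ℝ)/2)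
    = π * (2638920105/9007199254740992) := by
  rw [show (10:ℕ) = 2*5 by norm_num, I_sub]
  have hexp : Set.EqOn (fun x => sin x ^ (2*5) * cos x ^ 46)
      (fun x : ℝ => (1)*cos x^46 + (-5)*cos x^48 + (10)*cos x^50 + (-10)*cos x^52 + (5)*cos x^54 + (-1)*cos x^56)
      (Set.uIcc (-(π/2)) (π/2)) := by
    intro x _
    simp only
    rw [pow_mul, Real.sin_sq]
    ring
  rw [intervalIntegral.integral_congr hexp, split6, C23, C24, C25, C26, C27, C28]
  ring


lemma key47 : Real.sqrt π * Real.Gamma (47/2) * (2^45 * (Nat.factorial 22 : ℝ))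
    = π * (Nat.factorial 45 : ℝ) := by
  have h := Real.Gamma_mul_Gamma_add_half 23
  rw [show (23:ℝ)+1/2 = 47/2 by norm_num, show (2:ℝ)*23 = 46 by norm_num] at h
  have h23 : Real.Gamma 23 = Nat.factorial 22 := by
    rw [show (23:ℝ) = (22:ℕ)+1 by norm_num, Real.Gamma_nat_eq_factorial]
  have h46 : Real.Gamma 46 = Nat.factorial 45 := by
    rw [show (46:ℝ) = (45:ℕ)+1 by norm_num, Real.Gamma_nat_eq_factorial]
  have hr : (2:ℝ)^((1:ℝ)-46) = ((2:ℝ)^(45:ℕ))⁻¹ := by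
    rw [show ((1:ℝ)-46) = -((45:ℕ):ℝ) by norm_num, Real.rpow_neg (by norm_num),
      Real.rpow_natCast]
  rw [h23, h46, hr] at h
  have hπ : Real.sqrt π * Real.sqrt π = π := Real.mul_self_sqrt (le_of_lt Real.pi_pos)
  linear_combination ((2:ℝ)^45 * Real.sqrt π) * h + ((Nat.factorial 45 : ℝ)) * hπ

lemma hc : Real.Gamma 24 / (Real.sqrt Real.pi * Real.Gamma (47 / 2))
    = 4398046511104 / (514589420475 * π) := by
  have h24 : Real.Gamma 24 = Nat.factorial 23 := by
    rw [show (24:ℝ) = (23:ℕ)+1 by norm_num, Real.Gamma_nat_eq_factorial]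
  have hΓ : 0 < Real.Gamma (47/2) := Real.Gamma_pos_of_pos (by norm_num)
  have hs : 0 < Real.sqrt π := Real.sqrt_pos.mpr Real.pi_pos
  have key := key47
  have e22 : (Nat.factorial 22 : ℝ) = 1124000727777607680000 := by
    norm_num [Nat.factorial]
  have e45 : (Nat.factorial 45 : ℝ)
      = 119622220865480194561963161495657715064383733760000000000 := by
    norm_num [Nat.factorial]
  have e23 : (Nat.factorial 23 : ℝ) = 25852016738884976640000 := by
    norm_num [Nat.factorial]
  rw [e22, e45] at key
  rw [h24, e23, div_eq_div_iff (by positivity) (by positivity)]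
  linear_combination (-4398046511104 / ((2:ℝ)^45 * 1124000727777607680000)) * key

set_option maxHeartbeats 2000000 in
theorem quadrature_formula_dim48 (f : Polynomial ℝ) (hdeg : f.natDegree ≤ 11) :
    (Real.Gamma 24 / (Real.sqrt Real.pi * Real.Gamma (47 / 2))) *
        ∫ t in (-1 : ℝ)..1, f.eval t * (1 - t ^ 2) ^ ((45 : ℝ) / 2) =
      (1 / 52416000) *
        (36848 * (f.eval (-1/2) + f.eval (1/2)) +
          1678887 * (f.eval (-1/3) + f.eval (1/3)) +
          12608784 * (f.eval (-1/6) + f.eval (1/6)) +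
          23766960 * f.eval 0 + f.eval (-1) + f.eval 1) := by
  have hd : f.natDegree < 12 := lt_of_le_of_lt hdeg (by norm_num)
  have heval : ∀ t:ℝ, f.eval t = ∑ i ∈ Finset.range 12, f.coeff i * t^i :=
    fun t => Polynomial.eval_eq_sum_range' hd t
  have hsum : (∫ t in (-1:ℝ)..1, f.eval t * (1-t^2)^((45:ℝ)/2))
      = ∑ i ∈ Finset.range 12, f.coeff i * ∫ t in (-1:ℝ)..1, t^i * (1-t^2)^((45:ℝ)/2) := by
    have h1 : Set.EqOn (fun t : ℝ => f.eval t * (1-t^2)^((45:ℝ)/2))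
        (fun t : ℝ => ∑ i ∈ Finset.range 12, f.coeff i * (t^i * (1-t^2)^((45:ℝ)/2)))
        (Set.uIcc (-1:ℝ) 1) := by
      intro t _
      simp only
      rw [heval t, Finset.sum_mul]
      exact Finset.sum_congr rfl fun i _ => mul_assoc _ _ _
    rw [intervalIntegral.integral_congr h1, intervalIntegral.integral_finset_sum]
    · exact Finset.sum_congr rfl fun i _ => intervalIntegral.integral_const_mul _ _
    · intro i _
      exact ((continuous_const.mul ((continuous_pow i).mul contw))).intervalIntegrable _ _
  rw [hsum]
  simp only [Finset.sum_range_succ, Finset.sum_range_zero]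
  rw [E0, E2, E4, E6, E8, E10, I_odd 1 (by decide), I_odd 3 (by decide), I_odd 5 (by decide), I_odd 7 (by decide), I_odd 9 (by decide), I_odd 11 (by decide), hc]
  simp only [heval, Finset.sum_range_succ, Finset.sum_range_zero]
  have hπ : (π:ℝ) ≠ 0 := Real.pi_ne_zero
  field_simp
  ring
end
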